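/- arXiv:0903.4634 — 2 statements merged into one kernel-verified Lean document; each statement's English description precedes it below -/
import Mathlib

section
/- Let s, t ≥ 1 be natural numbers and let ((a_0,b_0),(a_1,b_1),...,(a_k,b_k)) be a finite sequence of pairs of positive integers such that a_0 + a_1 + ... + a_k = t and b_0 + b_1 + ... + b_k = s. Then there exists a vector w ∈ Row(s,t) whose pair sequence pairs(w) is a cyclic permutation of ((a_0,b_0),(a_1,b_1),...,(a_k,b_k)). -/
/-!
Lay the pairs out one after another: the pair `(a, b)` becomes the block `a, 0, …, 0` of
length `b`. The nonzero entries of the resulting row are exactly the first entries of the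
blocks, so the distance from one nonzero entry to the next is the length of its block, and
the pair sequence of the row is `p` itself, with no rotation needed.
-/

/-- The list of positions of the nonzero entries of `w`. -/
def nzPos (w : List ℕ) : List ℕ :=
  (List.range w.length).filter (fun i => w.getD i 0 ≠ 0)

/-- The pair sequence of `w`: each nonzero entry of `w` together with the cyclic
distance from its position to the next nonzero position. -/
def pairsOf (w : List ℕ) : List (ℕ × ℕ) :=
  (List.range (nzPos w).length).map (fun j =>
    (w.getD ((nzPos w).getD j 0) 0,
     if j + 1 = (nzPos w).length then (nzPos w).getD 0 0 + w.length - (nzPos w).getD j 0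
     else (nzPos w).getD (j + 1) 0 - (nzPos w).getD j 0))

def block (q : ℕ × ℕ) : List ℕ := q.1 :: List.replicate (q.2 - 1) 0

def rowOfPairs (p : List (ℕ × ℕ)) : List ℕ := p.flatMap block

def blockStart (p : List (ℕ × ℕ)) (j : ℕ) : ℕ := ((p.take j).map Prod.snd).sum

lemma length_block {q : ℕ × ℕ} (h : 0 < q.2) : (block q).length = q.2 := by
  simp only [block, List.length_cons, List.length_replicate]
  omega

lemma nzPos_block {q : ℕ × ℕ} (h : 0 < q.1) : nzPos (block q) = [0] := by
  simp only [nzPos, block, List.length_cons, List.length_replicate, List.range_succ_eq_map,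
    List.filter_cons, List.filter_map]
  simp [h.ne']

lemma nzPos_append (u v : List ℕ) :
    nzPos (u ++ v) = nzPos u ++ (nzPos v).map (· + u.length) := by
  simp only [nzPos, List.length_append, List.range_add, List.filter_append, List.filter_map]
  congr 1
  · exact List.filter_congr fun i hi => by
      rw [List.getD_append _ _ _ _ (List.mem_range.1 hi)]
  · rw [List.filter_congr (q := fun i => decide (v.getD i 0 ≠ 0)) fun i _ => by
      simp only [Function.comp, List.getD_append_right _ _ _ _ (Nat.le_add_right _ _),
        Nat.add_sub_cancel_left]]
    exact List.map_congr_left fun i _ => Nat.add_comm _ _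

section

variable {p : List (ℕ × ℕ)} {j : ℕ}

lemma length_rowOfPairs (h : ∀ q ∈ p, 0 < q.2) :
    (rowOfPairs p).length = (p.map Prod.snd).sum := by
  simp only [rowOfPairs, List.length_flatMap]
  exact congrArg List.sum (List.map_congr_left fun q hq => length_block (h q hq))

lemma sum_rowOfPairs : (rowOfPairs p).sum = (p.map Prod.fst).sum := by
  induction p with
  | nil => rfl
  | cons q p ih => simp [rowOfPairs, block, ← ih]

lemma blockStart_succ (hj : j < p.length) : blockStart p (j + 1) = blockStart p j + p[j].2 := by
  rw [blockStart, blockStart, List.map_take, List.map_take,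
    List.sum_take_succ _ j (by simpa using hj), List.getElem_map]

lemma blockStart_length : blockStart p p.length = (p.map Prod.snd).sum := by
  simp [blockStart]

lemma nzPos_rowOfPairs (hpos : ∀ q ∈ p, 0 < q.1 ∧ 0 < q.2) :
    nzPos (rowOfPairs p) = (List.range p.length).map (blockStart p) := by
  induction p with
  | nil => rfl
  | cons q p ih =>
    have hq := hpos q List.mem_cons_self
    rw [rowOfPairs, List.flatMap_cons, nzPos_append, nzPos_block hq.1, length_block hq.2,
      ← rowOfPairs, ih fun r hr => hpos r (List.mem_cons_of_mem q hr), List.length_cons,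
      List.range_succ_eq_map]
    simp [blockStart, add_comm]

lemma getD_rowOfPairs_blockStart (h : ∀ q ∈ p, 0 < q.2) (hj : j < p.length) :
    (rowOfPairs p).getD (blockStart p j) 0 = p[j].1 := by
  induction p generalizing j with
  | nil => simp at hj
  | cons q p ih =>
    cases j with
    | zero => simp [rowOfPairs, blockStart, block]
    | succ j =>
      have hstart : blockStart (q :: p) (j + 1) = (block q).length + blockStart p j := by
        simp [blockStart, length_block (h q List.mem_cons_self)]
      rw [hstart, rowOfPairs, List.flatMap_cons, List.getD_append_right _ _ _ _ (by omega),
        Nat.add_sub_cancel_left]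
      exact ih (fun r hr => h r (List.mem_cons_of_mem q hr)) (by simpa using hj)

lemma pairsOf_rowOfPairs (hpos : ∀ q ∈ p, 0 < q.1 ∧ 0 < q.2) : pairsOf (rowOfPairs p) = p := by
  have hsnd : ∀ q ∈ p, 0 < q.2 := fun q hq => (hpos q hq).2
  have hstarts (j : ℕ) (hj : j < p.length) : (nzPos (rowOfPairs p)).getD j 0 = blockStart p j := by
    rw [nzPos_rowOfPairs hpos, List.getD_eq_getElem _ _ (by simpa using hj)]
    simp
  have hlen : (nzPos (rowOfPairs p)).length = p.length := by simp [nzPos_rowOfPairs hpos]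
  refine List.ext_getElem (by simp [pairsOf, hlen]) fun j hj _ => ?_
  have hjp : j < p.length := by simpa [pairsOf, hlen] using hj
  simp only [pairsOf, List.getElem_map, List.getElem_range, hlen, hstarts j hjp,
    getD_rowOfPairs_blockStart hsnd hjp, length_rowOfPairs hsnd]
  have hnext := blockStart_succ hjp
  split_ifs with hlast
  · -- the gap after the last block wraps around to the first block, at position 0
    rw [hstarts 0 (by omega), ← blockStart_length, ← hlast, hnext]
    simp [blockStart]
  · rw [hstarts (j + 1) (by omega), hnext]
    simp

end

theorem exists_row_of_pairs_general (s t : ℕ)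
    (p : List (ℕ × ℕ))
    (hpos : ∀ q ∈ p, 0 < q.1 ∧ 0 < q.2)
    (hsum1 : (p.map Prod.fst).sum = t) (hsum2 : (p.map Prod.snd).sum = s) :
    ∃ w : List ℕ, w.length = s ∧ w.sum = t ∧ pairsOf w ~r p :=
  ⟨rowOfPairs p, by rw [length_rowOfPairs fun q hq => (hpos q hq).2, hsum2],
    by rw [sum_rowOfPairs, hsum1], by rw [pairsOf_rowOfPairs hpos]⟩

/-- Any finite sequence of pairs of positive integers whose first coordinates sum to `t` and
whose second coordinates sum to `s` is, up to cyclic permutation, the pair sequence of some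
vector in `Row(s,t)`. -/
theorem exists_row_of_pairs (s t : ℕ) (hs : 1 ≤ s) (ht : 1 ≤ t)
    (p : List (ℕ × ℕ)) (hne : p ≠ [])
    (hpos : ∀ q ∈ p, 0 < q.1 ∧ 0 < q.2)
    (hsum1 : (p.map Prod.fst).sum = t) (hsum2 : (p.map Prod.snd).sum = s) :
    ∃ w : List ℕ, w.length = s ∧ w.sum = t ∧ pairsOf w ~r p :=
  exists_row_of_pairs_general s t p hpos hsum1 hsum2
end

section
/- Let s, t ≥ 1 be natural numbers. The complement map ⟨w⟩ ↦ ⟨w⟩^c is a bijection from the set of cyclic equivalence classes of Row(s,t) onto the set of cyclic equivalence classes of Row(t,s). -/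
/-- The complemented pair sequence: `((a₀,b₀),...,(a_k,b_k)) ↦ ((b₀,a₁),(b₁,a₂),...,(b_k,a₀))`. -/
def complPairs (p : List (ℕ × ℕ)) : List (ℕ × ℕ) :=
  (p.map Prod.snd).zip ((p.map Prod.fst).rotate 1)

/-- `v` is a complement of `w`: `v ∈ Row(t,s)` (where `w ∈ Row(s,t)`) and the pair sequence
of `v` is a cyclic permutation of the complemented pair sequence of `w`. -/
def IsComplementOf (w v : List ℕ) : Prop :=
  v.length = w.sum ∧ v.sum = w.length ∧ pairsOf v ~r complPairs (pairsOf w)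

/-!
A row with a nonzero entry is, up to rotation, the concatenation of the blocks
`a :: 0^(b-1)`, one for each pair `(a, b)` of its pair sequence (`fromPairs`). Hence the pair
sequence, taken up to rotation, determines the cyclic class of the row, and every sequence of
pairs of positive integers occurs. Complementation acts on pair sequences by `complPairs`,
which commutes with rotation and whose square is rotation by one step, so it is well defined
on classes and an involution on them. It exchanges `Σ aᵢ = t` with `Σ bᵢ = s`, so it maps
`Row(s,t)` to `Row(t,s)`.
-/

lemma nzPos_cons (x : ℕ) (xs : List ℕ) :
    nzPos (x :: xs) = (if x ≠ 0 then [0] else []) ++ (nzPos xs).map (· + 1) := by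
  unfold nzPos
  rw [List.length_cons, List.range_succ_eq_map, List.filter_cons, List.filter_map]
  have hshift : ((fun i => decide ((x :: xs).getD i 0 ≠ 0)) ∘ Nat.succ)
      = fun i => decide (xs.getD i 0 ≠ 0) := by
    funext i; simp
  rw [hshift]
  split <;> simp_all

lemma nzPos_append_zero (l : List ℕ) : nzPos (l ++ [0]) = nzPos l := by
  unfold nzPos
  rw [List.length_append, List.length_singleton, List.range_succ, List.filter_append]
  have hlast : (l ++ [0]).getD l.length 0 = 0 := by simp
  rw [List.filter_singleton, hlast]
  simp only [ne_eq, not_true_eq_false, decide_false, cond_false, List.append_nil]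
  apply List.filter_congr
  intro i hi
  rw [List.getD_append _ _ _ _ (List.mem_range.1 hi)]

lemma nzPos_replicate_zero_append (m : ℕ) (l : List ℕ) :
    nzPos (List.replicate m 0 ++ l) = (nzPos l).map (· + m) := by
  induction m with
  | zero => simp
  | succ n ih =>
      rw [List.replicate_succ, List.cons_append, nzPos_cons, ih]
      simp [List.map_map]

lemma getD_nzPos_lt_length {w : List ℕ} {j : ℕ} (hj : j < (nzPos w).length) :
    (nzPos w).getD j 0 < w.length := by
  rw [List.getD_eq_getElem _ _ hj]
  have hmem := List.getElem_mem hj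
  simp only [nzPos, List.mem_filter, List.mem_range] at hmem
  exact hmem.1

lemma List.getD_map_add_zero (l : List ℕ) (c : ℕ) {j : ℕ} (h : j < l.length) :
    (l.map (· + c)).getD j 0 = l.getD j 0 + c := by
  rw [List.getD_eq_getElem _ _ (by simpa using h), List.getElem_map,
    List.getD_eq_getElem _ _ h]

lemma nzPos_cons_replicate_zero_append {a : ℕ} (ha : a ≠ 0) (m : ℕ) (l : List ℕ) :
    nzPos (a :: (List.replicate m 0 ++ l)) = 0 :: (nzPos l).map (· + (m + 1)) := by
  rw [nzPos_cons, nzPos_replicate_zero_append]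
  simp [ha, List.map_map]

lemma pairsOf_cons_replicate_zero (a m : ℕ) (ha : a ≠ 0) :
    pairsOf (a :: List.replicate m 0) = [(a, m + 1)] := by
  have hzeros : nzPos (List.replicate m 0) = [] := by
    have h := nzPos_replicate_zero_append m []
    rwa [List.append_nil] at h
  simp [pairsOf, nzPos_cons, ha, hzeros]

lemma pairsOf_cons_replicate_zero_append (a m c : ℕ) (r : List ℕ) (ha : a ≠ 0)
    (hc : c ≠ 0) :
    pairsOf (a :: (List.replicate m 0 ++ c :: r)) = (a, m + 1) :: pairsOf (c :: r) := by
  set P := nzPos (c :: r) with hP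
  set w := a :: (List.replicate m 0 ++ c :: r)
  have hP_eq : P = 0 :: (nzPos r).map (· + 1) := by rw [hP, nzPos_cons]; simp [hc]
  have hP0 : P.getD 0 0 = 0 := by rw [hP_eq]; rfl
  have hPlen : 0 < P.length := by rw [hP_eq]; simp
  have hN : nzPos w = 0 :: P.map (· + (m + 1)) := nzPos_cons_replicate_zero_append ha m _
  have hN_succ : ∀ j < P.length,
      (0 :: P.map (· + (m + 1))).getD (j + 1) 0 = P.getD j 0 + (m + 1) := fun j hj => by
    rw [List.getD_cons_succ, List.getD_map_add_zero _ _ hj]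
  have hw_getD : ∀ p, w.getD (p + (m + 1)) 0 = (c :: r).getD p 0 := fun p => by
    rw [show w = (a :: List.replicate m 0) ++ (c :: r) by simp [w],
      List.getD_append_right _ _ _ _ (by simp)]
    simp
  have hw_len : w.length = (m + 1) + (c :: r).length := by simp [w]; omega
  unfold pairsOf
  rw [hN, ← hP]
  simp only [List.length_cons, List.length_map]
  rw [List.range_succ_eq_map, List.map_cons, List.map_map]
  congr 1
  · simp only [List.getD_cons_zero, hN_succ 0 hPlen, hP0,
      if_neg (by omega : ¬0 + 1 = P.length + 1)]
    simp [w]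
  · apply List.map_congr_left
    intro j hj
    rw [List.mem_range] at hj
    have hbound : P.getD j 0 < (c :: r).length := getD_nzPos_lt_length hj
    simp only [Function.comp, Nat.succ_eq_add_one, hN_succ j hj, hw_getD, List.getD_cons_zero]
    by_cases hlast : j + 1 = P.length
    · rw [List.length_cons] at hbound
      simp only [if_pos (by omega : j + 1 + 1 = P.length + 1), if_pos hlast, hw_len, hP0,
        List.length_cons]
      congr 1
      omega
    · have hj1 : j + 1 < P.length := by omega
      simp only [if_neg (by omega : ¬j + 1 + 1 = P.length + 1), if_neg hlast, hN_succ (j + 1) hj1]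
      congr 1
      omega

lemma pairsOf_cons_zero (l : List ℕ) : pairsOf (0 :: l) = pairsOf (l ++ [0]) := by
  have hcons : nzPos (0 :: l) = (nzPos l).map (· + 1) := by rw [nzPos_cons]; simp
  set P := nzPos l with hP
  unfold pairsOf
  rw [hcons, nzPos_append_zero, ← hP, List.length_map]
  apply List.map_congr_left
  intro j hj
  rw [List.mem_range] at hj
  have hbound : P.getD j 0 < l.length := getD_nzPos_lt_length hj
  rw [List.getD_map_add_zero _ _ hj, List.getD_cons_succ, List.getD_append _ _ _ _ hbound]
  by_cases hlast : j + 1 = P.length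
  · simp only [if_pos hlast, List.getD_map_add_zero _ _ (by omega : 0 < P.length),
      List.length_cons, List.length_append, List.length_nil]
    congr 1
    omega
  · simp only [if_neg hlast, List.getD_map_add_zero _ _ (by omega : j + 1 < P.length)]
    congr 1
    omega

lemma pairsOf_replicate_zero_append (m : ℕ) (l : List ℕ) :
    pairsOf (List.replicate m 0 ++ l) = pairsOf (l ++ List.replicate m 0) := by
  induction m generalizing l with
  | zero => simp
  | succ m ih =>
      rw [List.replicate_succ, List.cons_append, pairsOf_cons_zero, List.append_assoc, ih,
        List.append_assoc]
      rfl

theorem List.IsRotated.flatMap {α β : Type*} {l l' : List α} (h : l ~r l') (f : α → List β) :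
    l.flatMap f ~r l'.flatMap f := by
  obtain ⟨n, hn, rfl⟩ := List.isRotated_iff_mod.1 h
  conv_lhs => rw [← List.take_append_drop n l]
  rw [List.rotate_eq_drop_append_take hn, List.flatMap_append, List.flatMap_append]
  exact List.isRotated_append

/-- The row `a₀ 0^(b₀-1) a₁ 0^(b₁-1) ⋯` with pair sequence `p`. -/
def fromPairs (p : List (ℕ × ℕ)) : List ℕ :=
  p.flatMap fun q => q.1 :: List.replicate (q.2 - 1) 0

def PairsNeZero (p : List (ℕ × ℕ)) : Prop :=
  ∀ q ∈ p, q.1 ≠ 0 ∧ q.2 ≠ 0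

lemma fromPairs_cons (a b : ℕ) (p : List (ℕ × ℕ)) :
    fromPairs ((a, b) :: p) = a :: (List.replicate (b - 1) 0 ++ fromPairs p) := by
  simp [fromPairs]

lemma fromPairs_singleton (a b : ℕ) : fromPairs [(a, b)] = a :: List.replicate (b - 1) 0 := by
  simp [fromPairs]

lemma fromPairs_append (p p' : List (ℕ × ℕ)) :
    fromPairs (p ++ p') = fromPairs p ++ fromPairs p' :=
  List.flatMap_append

lemma List.IsRotated.fromPairs {p p' : List (ℕ × ℕ)} (h : p ~r p') :
    fromPairs p ~r fromPairs p' :=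
  h.flatMap _

lemma sum_fromPairs (p : List (ℕ × ℕ)) : (fromPairs p).sum = (p.map Prod.fst).sum := by
  induction p with
  | nil => rfl
  | cons q p ih =>
      obtain ⟨a, b⟩ := q
      simp [fromPairs_cons, ih]

lemma length_fromPairs {p : List (ℕ × ℕ)} (hp : PairsNeZero p) :
    (fromPairs p).length = (p.map Prod.snd).sum := by
  induction p with
  | nil => rfl
  | cons q p ih =>
      obtain ⟨a, b⟩ := q
      have hb := (hp (a, b) List.mem_cons_self).2
      simp only [fromPairs_cons, List.length_cons, List.length_append, List.length_replicate,
        ih fun q' hq' => hp q' (List.mem_cons_of_mem _ hq'), List.map_cons, List.sum_cons]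
      omega

lemma pairsOf_fromPairs {p : List (ℕ × ℕ)} (hp : PairsNeZero p) :
    pairsOf (fromPairs p) = p := by
  induction p with
  | nil => rfl
  | cons q p ih =>
      obtain ⟨a, b⟩ := q
      obtain ⟨ha, hb⟩ := hp (a, b) List.mem_cons_self
      have hb' : b - 1 + 1 = b := Nat.sub_add_cancel (Nat.one_le_iff_ne_zero.2 hb)
      rw [fromPairs_cons]
      match p, ih with
      | [], _ =>
          rw [fromPairs, List.flatMap_nil, List.append_nil, pairsOf_cons_replicate_zero _ _ ha, hb']
      | (c, d) :: p', ih =>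
          rw [fromPairs_cons c,
            pairsOf_cons_replicate_zero_append _ _ _ _ ha (hp (c, d) (by simp)).1,
            ← fromPairs_cons, ih fun q hq => hp q (List.mem_cons_of_mem _ hq), hb']

lemma exists_eq_replicate_zero_append (u : List ℕ) :
    ∃ m r, u = List.replicate m 0 ++ r ∧ (r = [] ∨ ∃ c r', r = c :: r' ∧ c ≠ 0) := by
  induction u with
  | nil => exact ⟨0, [], rfl, Or.inl rfl⟩
  | cons x u ih =>
      by_cases hx : x = 0
      · obtain ⟨m, r, rfl, hr⟩ := ih
        exact ⟨m + 1, r, by rw [hx, List.replicate_succ, List.cons_append], hr⟩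
      · exact ⟨0, x :: u, rfl, Or.inr ⟨x, u, rfl, hx⟩⟩

lemma exists_fromPairs_eq_cons {a : ℕ} (ha : a ≠ 0) (u : List ℕ) :
    ∃ p, PairsNeZero p ∧ fromPairs p = a :: u := by
  induction h : u.length using Nat.strong_induction_on generalizing a u with
  | _ n ih =>
    obtain ⟨m, r, rfl, rfl | ⟨c, r', rfl, hc⟩⟩ := exists_eq_replicate_zero_append u
    · refine ⟨[(a, m + 1)], by simp [PairsNeZero, ha], ?_⟩
      simp [fromPairs]
    · obtain ⟨p, hp, hpr⟩ := ih r'.length (by simp at h; omega) hc r' rfl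
      refine ⟨(a, m + 1) :: p, ?_, by rw [fromPairs_cons, hpr]; rfl⟩
      intro q hq
      rcases List.mem_cons.1 hq with rfl | hq
      exacts [⟨ha, by omega⟩, hp q hq]

lemma exists_isRotated_cons (w : List ℕ) (hw : w.sum ≠ 0) :
    ∃ a u, a ≠ 0 ∧ w ~r a :: u := by
  obtain ⟨m, r, rfl, rfl | ⟨c, r', rfl, hc⟩⟩ := exists_eq_replicate_zero_append w
  · simp at hw
  · exact ⟨c, r' ++ List.replicate m 0, hc, List.isRotated_append⟩

lemma pairsOf_rotate_one (w : List ℕ) : pairsOf (w.rotate 1) ~r pairsOf w := by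
  match w with
  | [] => rfl
  | x :: l =>
    rw [List.rotate_cons_succ, List.rotate_zero]
    by_cases hx : x = 0
    · rw [hx, pairsOf_cons_zero]
    obtain ⟨p, hp, hpx⟩ := exists_fromPairs_eq_cons hx l
    match p, hp, hpx with
    | (a, b) :: p', hp, hpx =>
      rw [fromPairs_cons, List.cons.injEq] at hpx
      obtain ⟨rfl, rfl⟩ := hpx
      have hrot : pairsOf ((List.replicate (b - 1) 0 ++ fromPairs p') ++ [a]) = p' ++ [(a, b)] := by
        rw [List.append_assoc, pairsOf_replicate_zero_append, List.append_assoc,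
          List.singleton_append, ← fromPairs_singleton, ← fromPairs_append]
        exact pairsOf_fromPairs fun q hq => hp q ((List.isRotated_concat _ _).mem_iff.1 hq)
      rw [hrot, ← fromPairs_cons, pairsOf_fromPairs hp]
      exact List.isRotated_concat _ _

lemma List.IsRotated.pairsOf {w w' : List ℕ} (h : w ~r w') : pairsOf w ~r pairsOf w' := by
  obtain ⟨n, rfl⟩ := h
  induction n with
  | zero => rw [List.rotate_zero]
  | succ n ih =>
      rw [← List.rotate_rotate]
      exact ih.trans (pairsOf_rotate_one _).symm

lemma pairsOf_eq_nil_of_sum_eq_zero {w : List ℕ} (hw : w.sum = 0) : pairsOf w = [] := by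
  have hrep : w = List.replicate w.length 0 ++ [] := by
    rw [List.append_nil, List.eq_replicate_iff]
    exact ⟨rfl, List.sum_eq_zero_iff.1 hw⟩
  have hnz : nzPos w = [] := by rw [hrep, nzPos_replicate_zero_append]; rfl
  simp [pairsOf, hnz]

lemma exists_pairsNeZero_isRotated {w : List ℕ} (hw : w.sum ≠ 0) :
    ∃ p, PairsNeZero p ∧ w ~r fromPairs p ∧ pairsOf w ~r p := by
  obtain ⟨a, u, ha, hrot⟩ := exists_isRotated_cons w hw
  obtain ⟨p, hp, hpu⟩ := exists_fromPairs_eq_cons ha u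
  refine ⟨p, hp, hpu ▸ hrot, ?_⟩
  simpa [← hpu, pairsOf_fromPairs hp] using hrot.pairsOf

lemma isRotated_fromPairs_iff {w : List ℕ} {p : List (ℕ × ℕ)} (hw : w.sum ≠ 0)
    (hp : PairsNeZero p) : w ~r fromPairs p ↔ pairsOf w ~r p := by
  refine ⟨fun h => pairsOf_fromPairs hp ▸ h.pairsOf, fun h => ?_⟩
  obtain ⟨p₀, -, hw₀, hp₀⟩ := exists_pairsNeZero_isRotated hw
  exact hw₀.trans (hp₀.symm.trans h).fromPairs

lemma pairsNeZero_pairsOf (w : List ℕ) : PairsNeZero (pairsOf w) := by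
  by_cases hw : w.sum = 0
  · simp [pairsOf_eq_nil_of_sum_eq_zero hw, PairsNeZero]
  obtain ⟨p, hp, -, hwp⟩ := exists_pairsNeZero_isRotated hw
  exact fun q hq => hp q (hwp.mem_iff.1 hq)

lemma sum_fst_pairsOf (w : List ℕ) : ((pairsOf w).map Prod.fst).sum = w.sum := by
  by_cases hw : w.sum = 0
  · simp [pairsOf_eq_nil_of_sum_eq_zero hw, hw]
  obtain ⟨p, -, hwp, hp⟩ := exists_pairsNeZero_isRotated hw
  rw [(hp.map _).perm.sum_eq, ← sum_fromPairs, hwp.perm.sum_eq]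

lemma sum_snd_pairsOf {w : List ℕ} (hw : w.sum ≠ 0) :
    ((pairsOf w).map Prod.snd).sum = w.length := by
  obtain ⟨p, hp, hwp, hpw⟩ := exists_pairsNeZero_isRotated hw
  rw [(hpw.map _).perm.sum_eq, ← length_fromPairs hp, hwp.perm.length_eq]

theorem List.zip_rotate {α β : Type*} {l : List α} {l' : List β} (h : l.length = l'.length)
    (n : ℕ) : (l.rotate n).zip (l'.rotate n) = (l.zip l').rotate n := by
  apply List.ext_getElem
  · simp [h]
  · intro i h₁ h₂
    rw [List.getElem_zip, List.getElem_rotate, List.getElem_rotate, List.getElem_rotate,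
      List.getElem_zip]
    congr 2 <;> rw [List.length_zip, h, min_self]

lemma complPairs_rotate (p : List (ℕ × ℕ)) (n : ℕ) :
    complPairs (p.rotate n) = (complPairs p).rotate n := by
  unfold complPairs
  rw [List.map_rotate, List.map_rotate, List.rotate_rotate, Nat.add_comm, ← List.rotate_rotate,
    List.zip_rotate (by simp)]

lemma List.IsRotated.complPairs {p p' : List (ℕ × ℕ)} (h : p ~r p') :
    complPairs p ~r complPairs p' := by
  obtain ⟨n, rfl⟩ := h
  rw [complPairs_rotate]
  exact (List.IsRotated.forall _ n).symm

lemma complPairs_complPairs (p : List (ℕ × ℕ)) : complPairs (complPairs p) = p.rotate 1 := by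
  unfold complPairs
  rw [List.map_snd_zip (by simp), List.map_fst_zip (by simp), List.zip_rotate (by simp),
    ← List.zip_of_prod rfl rfl]

lemma PairsNeZero.complPairs {p : List (ℕ × ℕ)} (hp : PairsNeZero p) :
    PairsNeZero (complPairs p) := by
  intro q hq
  obtain ⟨hb, ha⟩ := List.of_mem_zip (show (q.1, q.2) ∈ _ from hq)
  obtain ⟨r, hr, hrq⟩ := List.mem_map.1 hb
  obtain ⟨r', hr', hrq'⟩ := List.mem_map.1 (List.mem_rotate.1 ha)
  exact ⟨hrq ▸ (hp r hr).2, hrq' ▸ (hp r' hr').1⟩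

lemma sum_fst_complPairs (p : List (ℕ × ℕ)) :
    ((complPairs p).map Prod.fst).sum = (p.map Prod.snd).sum := by
  rw [complPairs, List.map_fst_zip (by simp)]

lemma sum_snd_complPairs (p : List (ℕ × ℕ)) :
    ((complPairs p).map Prod.snd).sum = (p.map Prod.fst).sum := by
  rw [complPairs, List.map_snd_zip (by simp)]
  exact (List.IsRotated.forall _ 1).perm.sum_eq

/-- A representative of the complement class `⟨w⟩ᶜ`. -/
def complement (w : List ℕ) : List ℕ :=
  fromPairs (complPairs (pairsOf w))

lemma pairsOf_complement (w : List ℕ) : pairsOf (complement w) = complPairs (pairsOf w) :=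
  pairsOf_fromPairs (pairsNeZero_pairsOf w).complPairs

lemma length_complement (w : List ℕ) : (complement w).length = w.sum := by
  rw [complement, length_fromPairs (pairsNeZero_pairsOf w).complPairs, sum_snd_complPairs,
    sum_fst_pairsOf]

lemma sum_complement {w : List ℕ} (hw : w.sum ≠ 0) : (complement w).sum = w.length := by
  rw [complement, sum_fromPairs, sum_fst_complPairs, sum_snd_pairsOf hw]

lemma isComplementOf_complement {w : List ℕ} (hw : w.sum ≠ 0) :
    IsComplementOf w (complement w) :=
  ⟨length_complement w, sum_complement hw, by rw [pairsOf_complement]⟩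

lemma complement_isComplementOf {w : List ℕ} (hw : w.sum ≠ 0) :
    IsComplementOf (complement w) w := by
  refine ⟨(sum_complement hw).symm, (length_complement w).symm, ?_⟩
  rw [pairsOf_complement, complPairs_complPairs]
  exact (List.IsRotated.forall _ 1).symm

lemma IsComplementOf.isRotated_complement {w v : List ℕ} (h : IsComplementOf w v)
    (hw : w.length ≠ 0) : v ~r complement w :=
  (isRotated_fromPairs_iff (h.2.1 ▸ hw) (pairsNeZero_pairsOf w).complPairs).2 h.2.2

lemma List.IsRotated.complement {w w' : List ℕ} (h : w ~r w') : complement w ~r complement w' :=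
  h.pairsOf.complPairs.fromPairs

lemma complement_complement {w : List ℕ} (hw : w.sum ≠ 0) : complement (complement w) ~r w :=
  ((complement_isComplementOf hw).isRotated_complement (by rw [length_complement]; exact hw)).symm

/-- The complement map `⟨w⟩ ↦ ⟨w⟩ᶜ` is a bijection from the set of cyclic classes of
`Row(s,t)` onto the set of cyclic classes of `Row(t,s)`: it is everywhere defined,
well defined and injective on cyclic classes, and surjective onto `Row(t,s)`. -/
theorem complement_bijective (s t : ℕ) (hs : 1 ≤ s) (ht : 1 ≤ t) :
    (∀ w : List ℕ, w.length = s → w.sum = t → ∃ v : List ℕ, IsComplementOf w v) ∧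
    (∀ w w' v v' : List ℕ, w.length = s → w.sum = t → w'.length = s → w'.sum = t →
      IsComplementOf w v → IsComplementOf w' v' → (w ~r w' ↔ v ~r v')) ∧
    (∀ v : List ℕ, v.length = t → v.sum = s →
      ∃ w : List ℕ, w.length = s ∧ w.sum = t ∧ IsComplementOf w v) := by
  refine ⟨fun w _ hsum => ⟨complement w, isComplementOf_complement (by omega)⟩, ?_, ?_⟩
  · intro w w' v v' hlen hsum hlen' hsum' hv hv'
    have hvw := hv.isRotated_complement (by omega)
    have hvw' := hv'.isRotated_complement (by omega)
    constructor
    · exact fun h => hvw.trans (h.complement.trans hvw'.symm)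
    · intro h
      have hc := (hvw.symm.trans (h.trans hvw')).complement
      exact (complement_complement (by omega)).symm.trans
        (hc.trans (complement_complement (by omega)))
  · intro v hlen hsum
    refine ⟨complement v, ?_, ?_, complement_isComplementOf (by omega)⟩
    · rw [length_complement, hsum]
    · rw [sum_complement (by omega), hlen]
end
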